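/- arXiv:2009.06185 — 7 statements merged into one kernel-verified Lean document; each statement's English description precedes it below -/
import Mathlib

section
/- Let (Ω, μ) be a measure space, let Q : Ω → ℝ be μ-integrable with Q ≥ 0 μ-a.e. and ∫ Q dμ > 0, and let u : Ω → ℝ be measurable with m ≤ u ≤ M μ-a.e. for real constants m ≤ M. Let c_r, c_i ∈ ℝ and let L : Ω → ℝ be μ-integrable with ∫ L dμ ≥ 0. Suppose the energy identities ∫ ((u − c_r)² − c_i²)·Q dμ = ∫ L dμ and ∫ (u − c_r)·Q dμ = 0 hold. Then (c_r − (M+m)/2)² + c_i² ≤ ((M−m)/2)². -/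
set_option autoImplicit false

open MeasureTheory

theorem semicircle_theoremize
    {Ω : Type*} [MeasurableSpace Ω] (μ : Measure Ω)
    (Q u L : Ω → ℝ) (m M c_r c_i : ℝ)
    (hQint : Integrable Q μ)
    (hQnn : ∀ᵐ x ∂μ, 0 ≤ Q x)
    (hQpos : 0 < ∫ x, Q x ∂μ)
    (hu : Measurable u)
    (hmM : m ≤ M)
    (hbd : ∀ᵐ x ∂μ, m ≤ u x ∧ u x ≤ M)
    (hLint : Integrable L μ)
    (hLnn : 0 ≤ ∫ x, L x ∂μ)
    (hreal : ∫ x, ((u x - c_r) ^ 2 - c_i ^ 2) * Q x ∂μ = ∫ x, L x ∂μ)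
    (himag : ∫ x, (u x - c_r) * Q x ∂μ = 0) :
    (c_r - (M + m) / 2) ^ 2 + c_i ^ 2 ≤ ((M - m) / 2) ^ 2 := by
  set C : ℝ := max (|m - c_r|) (|M - c_r|) with hC
  have hbound : ∀ᵐ x ∂μ, ‖u x - c_r‖ ≤ C := by
    filter_upwards [hbd] with x ⟨h1, h2⟩
    rw [Real.norm_eq_abs]
    rcases abs_le_max_abs_abs (by linarith : m - c_r ≤ u x - c_r)
      (by linarith : u x - c_r ≤ M - c_r) with h
    exact h
  have hmeas : AEStronglyMeasurable (fun x => u x - c_r) μ :=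
    (hu.sub measurable_const).aestronglyMeasurable
  have hf1 : Integrable (fun x => (u x - c_r) * Q x) μ :=
    hQint.bdd_mul hmeas hbound
  have hf2 : Integrable (fun x => (u x - c_r) ^ 2 * Q x) μ := by
    refine hQint.bdd_mul (c := C ^ 2) (hmeas.mul hmeas |>.congr ?_) ?_
    · exact Filter.Eventually.of_forall fun x => (sq (u x - c_r)).symm
    · filter_upwards [hbound] with x hx
      rw [Real.norm_eq_abs, abs_pow]
      exact pow_le_pow_left₀ (abs_nonneg _) (by rwa [Real.norm_eq_abs] at hx) 2
  -- split hreal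
  have hsplit : ∫ x, (u x - c_r) ^ 2 * Q x ∂μ - c_i ^ 2 * ∫ x, Q x ∂μ
      = ∫ x, L x ∂μ := by
    rw [← hreal, ← integral_const_mul, ← integral_sub hf2 (hQint.const_mul _)]
    congr 1; ext x; ring
  -- key nonnegativity
  have hkey : 0 ≤ ∫ x, (u x - m) * (M - u x) * Q x ∂μ := by
    refine integral_nonneg_of_ae ?_
    filter_upwards [hbd, hQnn] with x ⟨h1, h2⟩ hq
    exact mul_nonneg (mul_nonneg (by linarith) (by linarith)) hq
  have hexpand : ∫ x, (u x - m) * (M - u x) * Q x ∂μ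
      = -(∫ x, (u x - c_r) ^ 2 * Q x ∂μ)
        + (M + m - 2 * c_r) * ∫ x, (u x - c_r) * Q x ∂μ
        + (c_r - m) * (M - c_r) * ∫ x, Q x ∂μ := by
    have e1 : ∫ x, (-((u x - c_r) ^ 2 * Q x)
        + (M + m - 2 * c_r) * ((u x - c_r) * Q x)
        + (c_r - m) * (M - c_r) * Q x) ∂μ
        = -(∫ x, (u x - c_r) ^ 2 * Q x ∂μ)
          + (M + m - 2 * c_r) * ∫ x, (u x - c_r) * Q x ∂μ
          + (c_r - m) * (M - c_r) * ∫ x, Q x ∂μ := by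
      have i1 := integral_add (μ := μ)
        (f := fun x => -((u x - c_r) ^ 2 * Q x))
        (g := fun x => (M + m - 2 * c_r) * ((u x - c_r) * Q x))
        hf2.neg (hf1.const_mul _)
      have i2 := integral_add (μ := μ)
        (f := fun x => -((u x - c_r) ^ 2 * Q x)
          + (M + m - 2 * c_r) * ((u x - c_r) * Q x))
        (g := fun x => (c_r - m) * (M - c_r) * Q x)
        (hf2.neg.add (hf1.const_mul _)) (hQint.const_mul _)
      rw [i2, i1, integral_neg, integral_const_mul, integral_const_mul]
    rw [← e1]; congr 1; ext x; ring
  rw [hexpand, himag] at hkey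
  set IQ := ∫ x, Q x ∂μ
  set IL := ∫ x, L x ∂μ
  have h1 : c_i ^ 2 * IQ ≤ (c_r - m) * (M - c_r) * IQ := by nlinarith
  have h2 : c_i ^ 2 ≤ (c_r - m) * (M - c_r) :=
    le_of_mul_le_mul_right (by linarith [h1]) hQpos
  nlinarith [h2]
end

section
/- Let (Ω, μ) be a measure space, let Q : Ω → ℝ be μ-integrable with Q ≥ 0 μ-a.e. and ∫ Q dμ > 0, let u : Ω → ℝ be measurable such that u·Q and u²·Q are μ-integrable, let c_r, c_i ∈ ℝ, and let L : Ω → ℝ be μ-integrable. Suppose ∫ ((u − c_r)² − c_i²)·Q dμ = ∫ L dμ and ∫ (u − c_r)·Q dμ = 0. Then for every real number r_c and every R ≥ 0 satisfying ∫ (u − r_c)²·Q dμ − ∫ L dμ ≤ R²·∫ Q dμ, one has (c_r − r_c)² + c_i² ≤ R². -/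
set_option autoImplicit false

open MeasureTheory

theorem inner_envelope_semicircle
    {Ω : Type*} [MeasurableSpace Ω] (μ : Measure Ω)
    (Q u L : Ω → ℝ) (c_r c_i : ℝ)
    (hQint : Integrable Q μ)
    (hQnn : ∀ᵐ x ∂μ, 0 ≤ Q x)
    (hQpos : 0 < ∫ x, Q x ∂μ)
    (hu : Measurable u)
    (huQ : Integrable (fun x => u x * Q x) μ)
    (hu2Q : Integrable (fun x => (u x) ^ 2 * Q x) μ)
    (hLint : Integrable L μ)
    (hreal : ∫ x, ((u x - c_r) ^ 2 - c_i ^ 2) * Q x ∂μ = ∫ x, L x ∂μ)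
    (himag : ∫ x, (u x - c_r) * Q x ∂μ = 0) :
    ∀ (r_c R : ℝ), 0 ≤ R →
      (∫ x, (u x - r_c) ^ 2 * Q x ∂μ) - (∫ x, L x ∂μ) ≤ R ^ 2 * ∫ x, Q x ∂μ →
      (c_r - r_c) ^ 2 + c_i ^ 2 ≤ R ^ 2 := by
  intro r_c R hR hbound
  -- basic integrability facts
  have hI1 : Integrable (fun x => (u x - c_r) ^ 2 * Q x) μ := by
    have : (fun x => (u x - c_r) ^ 2 * Q x)
        = fun x => (u x) ^ 2 * Q x + (-(2 * c_r)) * (u x * Q x) + c_r ^ 2 * Q x := by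
      funext x; ring
    rw [this]
    exact (hu2Q.add (huQ.const_mul _)).add (hQint.const_mul _)
  have hJ : Integrable (fun x => (u x - c_r) * Q x) μ := by
    have : (fun x => (u x - c_r) * Q x)
        = fun x => u x * Q x + (-c_r) * Q x := by funext x; ring
    rw [this]
    exact huQ.add (hQint.const_mul _)
  set a := c_r - r_c with ha
  -- expand ∫ (u - r_c)^2 Q
  have hexp : (∫ x, (u x - r_c) ^ 2 * Q x ∂μ)
      = (∫ x, (u x - c_r) ^ 2 * Q x ∂μ) + a ^ 2 * ∫ x, Q x ∂μ := by
    have heq : (fun x => (u x - r_c) ^ 2 * Q x)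
        = fun x => ((u x - c_r) ^ 2 * Q x + (2 * a) * ((u x - c_r) * Q x))
            + a ^ 2 * Q x := by
      funext x; simp only [ha]; ring
    calc (∫ x, (u x - r_c) ^ 2 * Q x ∂μ)
        = ∫ x, ((u x - c_r) ^ 2 * Q x + (2 * a) * ((u x - c_r) * Q x))
            + a ^ 2 * Q x ∂μ := by rw [heq]
      _ = (∫ x, (u x - c_r) ^ 2 * Q x ∂μ)
            + (2 * a) * (∫ x, (u x - c_r) * Q x ∂μ)
            + a ^ 2 * ∫ x, Q x ∂μ := by
          rw [integral_add (f := fun x => (u x - c_r) ^ 2 * Q x + 2 * a * ((u x - c_r) * Q x))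
              (g := fun x => a ^ 2 * Q x)
              (by exact hI1.add (hJ.const_mul _)) (hQint.const_mul _),
            integral_add (f := fun x => (u x - c_r) ^ 2 * Q x)
              (g := fun x => 2 * a * ((u x - c_r) * Q x))
              hI1 (hJ.const_mul _), integral_const_mul, integral_const_mul]
      _ = (∫ x, (u x - c_r) ^ 2 * Q x ∂μ) + a ^ 2 * ∫ x, Q x ∂μ := by
          rw [himag]; ring
  -- from hreal : ∫ (u-c_r)^2 Q = ∫ L + c_i^2 ∫ Q
  have hreal' : (∫ x, (u x - c_r) ^ 2 * Q x ∂μ)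
      = (∫ x, L x ∂μ) + c_i ^ 2 * ∫ x, Q x ∂μ := by
    have heq : (fun x => ((u x - c_r) ^ 2 - c_i ^ 2) * Q x)
        = fun x => (u x - c_r) ^ 2 * Q x + (-(c_i ^ 2)) * Q x := by
      funext x; ring
    rw [heq, integral_add (f := fun x => (u x - c_r) ^ 2 * Q x)
        (g := fun x => -(c_i ^ 2) * Q x) hI1 (hQint.const_mul _),
      integral_const_mul] at hreal
    linarith [hreal]
  have key : (a ^ 2 + c_i ^ 2) * ∫ x, Q x ∂μ ≤ R ^ 2 * ∫ x, Q x ∂μ := by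
    nlinarith [hexp, hreal', hbound]
  have := le_of_mul_le_mul_right (by linarith [key] :
      (a ^ 2 + c_i ^ 2) * ∫ x, Q x ∂μ ≤ R ^ 2 * ∫ x, Q x ∂μ) hQpos
  linarith [this]
end

section
/- Let G_y, G_z, ρ, ρ_y, ρ_z, σ be real numbers with ρ ≠ 0, σ ≠ 0, and G_y·ρ_z = G_z·ρ_y. Then the characteristic polynomial of the 3×3 real matrix M with first row and first column zero and lower-right 2×2 block having rows (G_y·ρ_y/ρ − G_y²/σ, G_z·ρ_y/ρ − G_y·G_z/σ) and (G_z·ρ_y/ρ − G_y·G_z/σ, G_z·ρ_z/ρ − G_z²/σ) equals X²·(X − e), where e = (G_y·ρ_y + G_z·ρ_z)/ρ − (G_y² + G_z²)/σ; in particular the eigenvalues of M are 0, 0 and e. -/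
set_option autoImplicit false

open Polynomial

private lemma charpoly_aux (a b d : ℝ) :
    Matrix.charpoly (!![0,0,0;0,a,b;0,b,d] : Matrix (Fin 3) (Fin 3) ℝ)
      = X * ((X - C a) * (X - C d) - C b * C b) := by
  rw [Matrix.charpoly, Matrix.det_fin_three]
  simp [Matrix.charmatrix_apply_eq, Matrix.charmatrix_apply_ne, Matrix.charmatrix_apply]
  ring

theorem charpoly_L0_matrix
    (G_y G_z ρ ρ_y ρ_z σ : ℝ) (hρ : ρ ≠ 0) (hσ : σ ≠ 0)
    (halign : G_y * ρ_z = G_z * ρ_y) :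
    (Matrix.charpoly
        (!![0, 0, 0;
            0, G_y * ρ_y / ρ - G_y ^ 2 / σ, G_z * ρ_y / ρ - G_y * G_z / σ;
            0, G_z * ρ_y / ρ - G_y * G_z / σ, G_z * ρ_z / ρ - G_z ^ 2 / σ]
          : Matrix (Fin 3) (Fin 3) ℝ)
        = X ^ 2 * (X - C ((G_y * ρ_y + G_z * ρ_z) / ρ - (G_y ^ 2 + G_z ^ 2) / σ))) ∧
    (Matrix.charpoly
        (!![0, 0, 0;
            0, G_y * ρ_y / ρ - G_y ^ 2 / σ, G_z * ρ_y / ρ - G_y * G_z / σ;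
            0, G_z * ρ_y / ρ - G_y * G_z / σ, G_z * ρ_z / ρ - G_z ^ 2 / σ]
          : Matrix (Fin 3) (Fin 3) ℝ)).roots
        = ({0, 0, (G_y * ρ_y + G_z * ρ_z) / ρ - (G_y ^ 2 + G_z ^ 2) / σ} : Multiset ℝ) := by
  set a := G_y * ρ_y / ρ - G_y ^ 2 / σ with ha
  set b := G_z * ρ_y / ρ - G_y * G_z / σ with hb
  set d := G_z * ρ_z / ρ - G_z ^ 2 / σ with hd
  set e := (G_y * ρ_y + G_z * ρ_z) / ρ - (G_y ^ 2 + G_z ^ 2) / σ with he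
  have h1 : a + d = e := by rw [ha, hd, he]; field_simp; ring
  have h2 : a * d = b * b := by
    rw [ha, hb, hd]; field_simp
    linear_combination (G_z * ρ_y * σ ^ 2 - G_y * G_z * ρ * σ) * halign
  have hC1 : C a + C d = C e := by rw [← C_add, h1]
  have hC2 : C a * C d = C b * C b := by rw [← C_mul, ← C_mul, h2]
  have key : Matrix.charpoly
        (!![0, 0, 0;
            0, a, b;
            0, b, d] : Matrix (Fin 3) (Fin 3) ℝ) = X ^ 2 * (X - C e) := by
    rw [charpoly_aux]
    linear_combination (X : ℝ[X]) * hC2 - (X : ℝ[X]) ^ 2 * hC1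
  refine ⟨key, ?_⟩
  rw [key]
  have h0 : (X ^ 2 * (X - C e) : ℝ[X]) ≠ 0 :=
    mul_ne_zero (pow_ne_zero _ X_ne_zero) (X_sub_C_ne_zero e)
  rw [Polynomial.roots_mul h0, Polynomial.roots_pow, Polynomial.roots_X,
    Polynomial.roots_X_sub_C]
  rfl
end

section
/- Let (Ω, μ) be a measure space, let Q : Ω → ℝ be μ-integrable with Q ≥ 0 μ-a.e. and ∫ Q dμ > 0, and let u : Ω → ℝ be measurable with m ≤ u ≤ M μ-a.e. for real constants m ≤ M. Let c_r, c_i, Θ, γ ∈ ℝ, and let G, f : Ω → ℝ be μ-integrable. Suppose ∫ (u − c_r)·Q dμ = 0, ∫ ((u − c_r)² − c_i²)·Q dμ = ∫ G dμ, G ≥ f + Θ·Q μ-a.e., and ∫ f dμ ≥ γ·∫ Q dμ. Then (c_r − (M+m)/2)² + c_i² ≤ ((M−m)/2)² − Θ − γ. -/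
open MeasureTheory

/-!
Since `m ≤ u ≤ M` and `Q ≥ 0`, the integral of `(u - m) (M - u) Q` is nonnegative. Expanding
`(u - m) (M - u)` around `c_r` and inserting the two moment identities turns this into
`(c_i² + (c_r - m) (c_r - M)) ∫ Q ≤ -∫ G ≤ -(γ + Θ) ∫ Q`, and `(c_r - m) (c_r - M)` is
`(c_r - (M + m) / 2)² - ((M - m) / 2)²`.
-/

section

variable {Ω : Type*} [MeasurableSpace Ω] {μ : Measure Ω} {Q g : Ω → ℝ} {a b : ℝ}

theorem MeasureTheory.Integrable.mul_of_ae_mem_Icc (hQ : Integrable Q μ)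
    (hg : AEStronglyMeasurable g μ) (hbd : ∀ᵐ x ∂μ, a ≤ g x ∧ g x ≤ b) :
    Integrable (fun x => g x * Q x) μ :=
  hQ.bdd_mul hg (c := max |a| |b|) <| by
    filter_upwards [hbd] with x hx using abs_le_max_abs_abs hx.1 hx.2

theorem integral_sq_sub_sq_mul_add_le_of_ae_mem_Icc {u : Ω → ℝ} {m M : ℝ} (c_r c_i : ℝ)
    (hQ : Integrable Q μ) (hQnn : ∀ᵐ x ∂μ, 0 ≤ Q x) (hu : AEStronglyMeasurable u μ)
    (hbd : ∀ᵐ x ∂μ, m ≤ u x ∧ u x ≤ M) :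
    ∫ x, ((u x - c_r) ^ 2 - c_i ^ 2) * Q x ∂μ
        + (c_i ^ 2 + (c_r - m) * (c_r - M)) * ∫ x, Q x ∂μ
      ≤ (m + M - 2 * c_r) * ∫ x, (u x - c_r) * Q x ∂μ := by
  have hw : AEStronglyMeasurable (fun x => u x - c_r) μ := hu.sub aestronglyMeasurable_const
  have hwbd : ∀ᵐ x ∂μ, m - c_r ≤ u x - c_r ∧ u x - c_r ≤ M - c_r := by
    filter_upwards [hbd] with x hx using ⟨by linarith [hx.1], by linarith [hx.2]⟩
  have hwQ : Integrable (fun x => (u x - c_r) * Q x) μ := hQ.mul_of_ae_mem_Icc hw hwbd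
  have hw2Q : Integrable (fun x => ((u x - c_r) ^ 2 - c_i ^ 2) * Q x) μ :=
    ((hwQ.mul_of_ae_mem_Icc hw hwbd).sub (hQ.const_mul (c_i ^ 2))).congr <|
      .of_forall fun x => by simp only [Pi.sub_apply]; ring
  have hnonneg : 0 ≤ ∫ x, (u x - m) * (M - u x) * Q x ∂μ := by
    refine integral_nonneg_of_ae ?_
    filter_upwards [hbd, hQnn] with x hx hQx
    exact mul_nonneg (mul_nonneg (by linarith [hx.1]) (by linarith [hx.2])) hQx
  have hexpand : ∀ x, (u x - m) * (M - u x) * Q x = (m + M - 2 * c_r) * ((u x - c_r) * Q x)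
      - (((u x - c_r) ^ 2 - c_i ^ 2) * Q x + (c_i ^ 2 + (c_r - m) * (c_r - M)) * Q x) := by
    intro x; ring
  have hsum : Integrable (fun x => ((u x - c_r) ^ 2 - c_i ^ 2) * Q x
      + (c_i ^ 2 + (c_r - m) * (c_r - M)) * Q x) μ := hw2Q.add (hQ.const_mul _)
  simp_rw [hexpand] at hnonneg
  rw [integral_sub (hwQ.const_mul _) hsum, integral_add hw2Q (hQ.const_mul _),
    integral_const_mul, integral_const_mul] at hnonneg
  linarith

end

theorem semi_ellipse_skeleton_general
    {Ω : Type*} [MeasurableSpace Ω] (μ : Measure Ω)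
    (Q u G f : Ω → ℝ) (m M c_r c_i Θ γ : ℝ)
    (hQint : Integrable Q μ)
    (hQnn : ∀ᵐ x ∂μ, 0 ≤ Q x)
    (hQpos : 0 < ∫ x, Q x ∂μ)
    (hu : Measurable u)
    (hbd : ∀ᵐ x ∂μ, m ≤ u x ∧ u x ≤ M)
    (hGint : Integrable G μ)
    (hfint : Integrable f μ)
    (himag : ∫ x, (u x - c_r) * Q x ∂μ = 0)
    (hreal : ∫ x, ((u x - c_r) ^ 2 - c_i ^ 2) * Q x ∂μ = ∫ x, G x ∂μ)
    (hGf : ∀ᵐ x ∂μ, f x + Θ * Q x ≤ G x)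
    (hf : γ * ∫ x, Q x ∂μ ≤ ∫ x, f x ∂μ) :
    (c_r - (M + m) / 2) ^ 2 + c_i ^ 2 ≤ ((M - m) / 2) ^ 2 - Θ - γ := by
  have howard := integral_sq_sub_sq_mul_add_le_of_ae_mem_Icc c_r c_i hQint hQnn
    hu.aestronglyMeasurable hbd
  rw [hreal, himag, mul_zero] at howard
  have hG : ∫ x, f x ∂μ + Θ * ∫ x, Q x ∂μ ≤ ∫ x, G x ∂μ := by
    rw [← integral_const_mul, ← integral_add hfint (hQint.const_mul Θ)]
    exact integral_mono_ae (hfint.add (hQint.const_mul Θ)) hGint hGf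
  have hcoef : (c_i ^ 2 + (c_r - m) * (c_r - M) + Θ + γ) * ∫ x, Q x ∂μ ≤ 0 := by
    linarith
  nlinarith [nonpos_of_mul_nonpos_left hcoef hQpos]

theorem semi_ellipse_skeleton
    {Ω : Type*} [MeasurableSpace Ω] (μ : Measure Ω)
    (Q u G f : Ω → ℝ) (m M c_r c_i Θ γ : ℝ)
    (hQint : Integrable Q μ)
    (hQnn : ∀ᵐ x ∂μ, 0 ≤ Q x)
    (hQpos : 0 < ∫ x, Q x ∂μ)
    (hu : Measurable u)
    (hmM : m ≤ M)
    (hbd : ∀ᵐ x ∂μ, m ≤ u x ∧ u x ≤ M)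
    (hGint : Integrable G μ)
    (hfint : Integrable f μ)
    (himag : ∫ x, (u x - c_r) * Q x ∂μ = 0)
    (hreal : ∫ x, ((u x - c_r) ^ 2 - c_i ^ 2) * Q x ∂μ = ∫ x, G x ∂μ)
    (hGf : ∀ᵐ x ∂μ, f x + Θ * Q x ≤ G x)
    (hf : γ * ∫ x, Q x ∂μ ≤ ∫ x, f x ∂μ) :
    (c_r - (M + m) / 2) ^ 2 + c_i ^ 2 ≤ ((M - m) / 2) ^ 2 - Θ - γ :=
  semi_ellipse_skeleton_general μ Q u G f m M c_r c_i Θ γ hQint hQnn hQpos hu hbd hGint hfint himag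
    hreal hGf hf
end

section
/- Let w be a nonzero complex number, set U = w², let s > 0 be real, and let κ, κ₂, g be complex numbers. Define κ̂₁ = w·κ + κ₂/w, κ̂₂ = w·κ₂ and ĝ = w·g. Then |κ̂₁ − (2·Re(U)/(|U|² + s²))·κ̂₂ + ĝ/s²|² ≥ |U|·|κ + g/s²|² + (|U² − s²|²/(|U|² + s²)²)·|κ₂|²/|U| − 2·(|U² − s²|/(|U|² + s²))·|κ₂|·|κ + g/s²|. -/
set_option autoImplicit false

/-! Because `U = w²`, the shear correction merges with `κ₂ / w`:
`κ̂₁ - (2 Re U / (|U|² + s²)) κ̂₂ + ĝ / s² = w A - y` with `A = κ + g / s²` and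
`y = (κ₂ / w) (U² - s²) / (|U|² + s²)`. The estimate is then the reverse triangle inequality
`(‖w A‖ - ‖y‖)² ≤ ‖w A - y‖²`, expanded using `|w|² = |U|`. -/

open ComplexConjugate

theorem sq_norm_sub_norm_le_sq_norm_sub {E : Type*} [SeminormedAddCommGroup E] (a b : E) :
    (‖a‖ - ‖b‖) ^ 2 ≤ ‖a - b‖ ^ 2 := by
  rw [← sq_abs]
  exact pow_le_pow_left₀ (abs_nonneg _) (abs_norm_sub_norm_le a b) 2

theorem Complex.one_sub_two_re_div_mul (z : ℂ) (s : ℝ) (h : ‖z‖ ^ 2 + s ^ 2 ≠ 0) :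
    1 - ((2 * z.re / (‖z‖ ^ 2 + s ^ 2) : ℝ) : ℂ) * z
      = -((z ^ 2 - (s : ℂ) ^ 2) / ((‖z‖ ^ 2 + s ^ 2 : ℝ) : ℂ)) := by
  have hd : ((‖z‖ ^ 2 + s ^ 2 : ℝ) : ℂ) = z * conj z + (s : ℂ) ^ 2 := by
    rw [Complex.mul_conj, Complex.normSq_eq_norm_sq]; push_cast; ring
  have hd0 : ((‖z‖ ^ 2 + s ^ 2 : ℝ) : ℂ) ≠ 0 := by exact_mod_cast h
  rw [Complex.ofReal_div, ← Complex.add_conj]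
  field_simp
  rw [hd]
  ring

theorem rescaled_combination_eq (w U : ℂ) (hw : w ≠ 0) (hU : U = w ^ 2) (s : ℝ) (κ κ₂ g : ℂ) :
    (w * κ + κ₂ / w)
        - ((2 * U.re / (‖U‖ ^ 2 + s ^ 2) : ℝ) : ℂ) * (w * κ₂)
        + (w * g) / (s : ℂ) ^ 2
      = w * (κ + g / (s : ℂ) ^ 2)
        - κ₂ / w * ((U ^ 2 - (s : ℂ) ^ 2) / ((‖U‖ ^ 2 + s ^ 2 : ℝ) : ℂ)) := by
  have hd : ‖U‖ ^ 2 + s ^ 2 ≠ 0 := by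
    have : U ≠ 0 := hU ▸ pow_ne_zero 2 hw
    positivity
  rw [← neg_neg ((U ^ 2 - (s : ℂ) ^ 2) / _), ← Complex.one_sub_two_re_div_mul U s hd, hU]
  field_simp
  ring

theorem pointwise_estimate_E2_general
    (w U : ℂ) (hw : w ≠ 0) (hU : U = w ^ 2) (s : ℝ) (κ κ₂ g : ℂ) :
    ‖U‖ * ‖κ + g / (s : ℂ) ^ 2‖ ^ 2
      + (‖U ^ 2 - (s : ℂ) ^ 2‖ ^ 2 / (‖U‖ ^ 2 + s ^ 2) ^ 2)
          * ‖κ₂‖ ^ 2 / ‖U‖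
      - 2 * (‖U ^ 2 - (s : ℂ) ^ 2‖ / (‖U‖ ^ 2 + s ^ 2))
          * ‖κ₂‖ * ‖κ + g / (s : ℂ) ^ 2‖
    ≤ ‖(w * κ + κ₂ / w)
        - ((2 * U.re / (‖U‖ ^ 2 + s ^ 2) : ℝ) : ℂ) * (w * κ₂)
        + (w * g) / (s : ℂ) ^ 2‖ ^ 2 := by
  rw [rescaled_combination_eq w U hw hU]
  refine le_of_eq_of_le ?_ (sq_norm_sub_norm_le_sq_norm_sub _ _)
  have hw' : 0 < ‖w‖ := norm_pos_iff.mpr hw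
  have hUw : ‖U‖ = ‖w‖ ^ 2 := by rw [hU, norm_pow]
  have hd : 0 < ‖U‖ ^ 2 + s ^ 2 := by rw [hUw]; positivity
  rw [norm_mul, norm_mul, norm_div, norm_div, Complex.norm_real, Real.norm_of_nonneg hd.le, hUw]
  field_simp
  ring

theorem pointwise_estimate_E2
    (w U : ℂ) (hw : w ≠ 0) (hU : U = w ^ 2) (s : ℝ) (hs : 0 < s) (κ κ₂ g : ℂ) :
    ‖U‖ * ‖κ + g / (s : ℂ) ^ 2‖ ^ 2
      + (‖U ^ 2 - (s : ℂ) ^ 2‖ ^ 2 / (‖U‖ ^ 2 + s ^ 2) ^ 2)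
          * ‖κ₂‖ ^ 2 / ‖U‖
      - 2 * (‖U ^ 2 - (s : ℂ) ^ 2‖ / (‖U‖ ^ 2 + s ^ 2))
          * ‖κ₂‖ * ‖κ + g / (s : ℂ) ^ 2‖
    ≤ ‖(w * κ + κ₂ / w)
        - ((2 * U.re / (‖U‖ ^ 2 + s ^ 2) : ℝ) : ℂ) * (w * κ₂)
        + (w * g) / (s : ℂ) ^ 2‖ ^ 2 :=
  pointwise_estimate_E2_general w U hw hU s κ κ₂ g
end

section
/- Let J_m > 1/4, λ_M > 0, a_M > 0 and k > 0 be real numbers, and set L = λ_M/k², H₀ = L/(1 − 1/(4·J_m)), and H₊, H₋ = [(4·J_m·L + a_M²) ± √((4·J_m·L + a_M²)² − 4·(4·J_m − 1)·L·a_M²)]/(2·(4·J_m − 1)). Then (4·J_m·L + a_M²)² − 4·(4·J_m − 1)·L·a_M² > 0 and H₋ < H₀ < H₊. -/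
set_option autoImplicit false

theorem appendix_F_root_ordering
    (J_m lam_M a_M k L H₀ Hp Hm : ℝ)
    (hJm : 1 / 4 < J_m) (hlam : 0 < lam_M) (haM : 0 < a_M) (hk : 0 < k)
    (hL : L = lam_M / k ^ 2)
    (hH0 : H₀ = L / (1 - 1 / (4 * J_m)))
    (hHp : Hp = ((4 * J_m * L + a_M ^ 2)
        + Real.sqrt ((4 * J_m * L + a_M ^ 2) ^ 2 - 4 * (4 * J_m - 1) * L * a_M ^ 2))
        / (2 * (4 * J_m - 1)))
    (hHm : Hm = ((4 * J_m * L + a_M ^ 2)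
        - Real.sqrt ((4 * J_m * L + a_M ^ 2) ^ 2 - 4 * (4 * J_m - 1) * L * a_M ^ 2))
        / (2 * (4 * J_m - 1))) :
    0 < (4 * J_m * L + a_M ^ 2) ^ 2 - 4 * (4 * J_m - 1) * L * a_M ^ 2 ∧
    Hm < H₀ ∧ H₀ < Hp := by
  have hb : (0:ℝ) < 4 * J_m - 1 := by linarith
  have hLpos : 0 < L := by rw [hL]; positivity
  have ha2 : 0 < a_M ^ 2 := by positivity
  have hkey : (4 * J_m * L + a_M ^ 2) ^ 2 - 4 * (4 * J_m - 1) * L * a_M ^ 2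
      = (4 * J_m * L - a_M ^ 2) ^ 2 + 4 * L * a_M ^ 2 := by ring
  have hD : 0 < (4 * J_m * L + a_M ^ 2) ^ 2 - 4 * (4 * J_m - 1) * L * a_M ^ 2 := by
    rw [hkey]
    nlinarith [sq_nonneg (4 * J_m * L - a_M ^ 2), mul_pos hLpos ha2]
  set s := Real.sqrt ((4 * J_m * L + a_M ^ 2) ^ 2 - 4 * (4 * J_m - 1) * L * a_M ^ 2)
    with hsdef
  have hs0 : 0 ≤ s := Real.sqrt_nonneg _
  have hs2 : s ^ 2 = (4 * J_m * L - a_M ^ 2) ^ 2 + 4 * L * a_M ^ 2 := by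
    rw [hsdef, Real.sq_sqrt hD.le, hkey]
  have h1 : 4 * J_m * L - a_M ^ 2 < s := by
    nlinarith [mul_pos hLpos ha2]
  have h2 : -s < 4 * J_m * L - a_M ^ 2 := by
    nlinarith [mul_pos hLpos ha2]
  have h4J : (4 : ℝ) * J_m ≠ 0 := by positivity
  have hH0' : H₀ = 4 * J_m * L / (4 * J_m - 1) := by
    rw [hH0]
    have hne : (1 - 1 / (4 * J_m)) ≠ 0 := by
      have : 1 / (4 * J_m) < 1 := by rw [div_lt_one (by positivity)]; linarith
      linarith
    rw [div_eq_div_iff hne hb.ne']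
    field_simp
  refine ⟨hD, ?_, ?_⟩
  · rw [hHm, hH0', div_lt_div_iff₀ (by linarith) hb]
    nlinarith
  · rw [hH0', hHp, div_lt_div_iff₀ hb (by linarith)]
    nlinarith
end

section
/- Let k, c_i, a_M, λ_M be positive real numbers and J_m > 1/4, and set μ = 1 − λ_M/(k²·c_i²), L = λ_M/k², and H₊ = [(4·J_m·L + a_M²) + √((4·J_m·L + a_M²)² − 4·(4·J_m − 1)·L·a_M²)]/(2·(4·J_m − 1)). Assume that whenever 4·J_m·μ > 1, one has c_i² < a_M²/(4·J_m − 1/μ). Then c_i² < H₊. -/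
set_option autoImplicit false
set_option maxHeartbeats 1000000

theorem growth_rate_upper_bound
    (k c_i a_M lam_M J_m μ L Hp : ℝ)
    (hk : 0 < k) (hci : 0 < c_i) (haM : 0 < a_M) (hlam : 0 < lam_M)
    (hJm : 1 / 4 < J_m)
    (hμ : μ = 1 - lam_M / (k ^ 2 * c_i ^ 2))
    (hL : L = lam_M / k ^ 2)
    (hHp : Hp = ((4 * J_m * L + a_M ^ 2)
        + Real.sqrt ((4 * J_m * L + a_M ^ 2) ^ 2 - 4 * (4 * J_m - 1) * L * a_M ^ 2))
        / (2 * (4 * J_m - 1)))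
    (hmain : 1 < 4 * J_m * μ → c_i ^ 2 < a_M ^ 2 / (4 * J_m - 1 / μ)) :
    c_i ^ 2 < Hp := by
  have hx : 0 < c_i ^ 2 := by positivity
  have hk2 : 0 < k ^ 2 := by positivity
  have hA : 0 < 4 * J_m - 1 := by linarith
  have hLpos : 0 < L := by rw [hL]; positivity
  set D : ℝ := (4 * J_m * L + a_M ^ 2) ^ 2 - 4 * (4 * J_m - 1) * L * a_M ^ 2 with hD
  have hDeq : D = (4 * J_m * L - a_M ^ 2) ^ 2 + 4 * L * a_M ^ 2 := by rw [hD]; ring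
  have hD0 : 0 ≤ D := by nlinarith [sq_nonneg (4 * J_m * L - a_M ^ 2)]
  set s : ℝ := Real.sqrt D with hsdef
  have hs0 : 0 ≤ s := Real.sqrt_nonneg _
  have hs2 : s ^ 2 = D := Real.sq_sqrt hD0
  clear_value s
  clear_value D
  -- s > 4 J_m L - a_M ^ 2
  have hskey : 4 * J_m * L - a_M ^ 2 < s := by
    by_contra h
    push_neg at h
    nlinarith [mul_self_le_mul_self hs0 h, hs2, hDeq, mul_pos hLpos (pow_pos haM 2)]
  -- μ * c_i^2 = c_i^2 - L
  have hμx : μ * c_i ^ 2 = c_i ^ 2 - L := by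
    rw [hμ, hL]
    field_simp
  by_contra hcon
  push_neg at hcon
  have hHpx : Hp ≤ c_i ^ 2 := hcon
  have h2A : (0:ℝ) < 2 * (4 * J_m - 1) := by linarith
  have hHpval : 2 * (4 * J_m - 1) * Hp = 4 * J_m * L + a_M ^ 2 + s := by
    rw [hHp]; field_simp
  have hge : 4 * J_m * L + a_M ^ 2 + s ≤ 2 * (4 * J_m - 1) * c_i ^ 2 := by
    rw [← hHpval]
    exact mul_le_mul_of_nonneg_left hHpx (le_of_lt h2A)
  -- Q(x) ≥ 0 when x ≥ Hp
  have hQ : 0 ≤ (4 * J_m - 1) * (c_i ^ 2) ^ 2 - (4 * J_m * L + a_M ^ 2) * c_i ^ 2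
      + L * a_M ^ 2 := by
    nlinarith [sq_nonneg (2 * (4 * J_m - 1) * c_i ^ 2 - (4 * J_m * L + a_M ^ 2) - s),
      mul_nonneg hs0 (sub_nonneg.mpr hge)]
  by_cases hcase : 1 < 4 * J_m * μ
  · -- main hypothesis gives Q < 0
    have hb := hmain hcase
    have hμ0 : 0 < μ := by nlinarith
    have hd : 0 < 4 * J_m - 1 / μ := by
      rw [sub_pos, div_lt_iff₀ hμ0]; linarith [mul_comm J_m μ]
    have h1 : c_i ^ 2 * (4 * J_m - 1 / μ) < a_M ^ 2 := (lt_div_iff₀ hd).mp hb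
    have hμne : μ ≠ 0 := ne_of_gt hμ0
    have haux : (4 * J_m - 1 / μ) * μ = 4 * J_m * μ - 1 := by field_simp
    have h2 : c_i ^ 2 * (4 * J_m * μ - 1) < a_M ^ 2 * μ := by
      have := mul_lt_mul_of_pos_right h1 hμ0
      calc c_i ^ 2 * (4 * J_m * μ - 1)
          = c_i ^ 2 * (4 * J_m - 1 / μ) * μ := by
            linear_combination (-(c_i ^ 2)) * haux
        _ < a_M ^ 2 * μ := this
    -- multiply by c_i^2 and use hμx
    have h3 := mul_lt_mul_of_pos_right h2 hx
    have e1 : c_i ^ 2 * (4 * J_m * μ - 1) * c_i ^ 2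
        = 4 * J_m * (c_i ^ 2 - L) * c_i ^ 2 - (c_i ^ 2) ^ 2 := by
      linear_combination (4 * J_m * c_i ^ 2) * hμx
    have e2 : a_M ^ 2 * μ * c_i ^ 2 = a_M ^ 2 * (c_i ^ 2 - L) := by
      linear_combination a_M ^ 2 * hμx
    rw [e1, e2] at h3
    nlinarith [h3, hQ]
  · -- 4 J_m μ ≤ 1 case
    push_neg at hcase
    have h3 : (4 * J_m - 1) * c_i ^ 2 ≤ 4 * J_m * L := by
      have h4 := mul_le_mul_of_nonneg_right hcase hx.le
      have e : 4 * J_m * μ * c_i ^ 2 = 4 * J_m * (c_i ^ 2 - L) := by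
        linear_combination (4 * J_m) * hμx
      rw [e] at h4
      linarith
    linarith [hge, hskey, h3]
end
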